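/- arXiv:2005.07932 — 8 statements merged into one kernel-verified Lean document; each statement's English description precedes it below -/
import Mathlib

section
/- Let p be a prime, and let a ∈ {1,…,p−1} divide p−1; set k = (p−1)/a. Then for all i with 0 ≤ i ≤ p−1, we have ⌊(i+1)a/p⌋ = ⌊i/k⌋. -/
theorem stmt_0 (p a k : ℕ) (hp : p.Prime) (ha1 : 1 ≤ a) (ha2 : a ≤ p - 1)
    (hdvd : a ∣ p - 1) (hk : k = (p - 1) / a) :
    ∀ i ≤ p - 1, (i + 1) * a / p = i / k := by
  intro i hi
  have hp2 : 2 ≤ p := hp.two_le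
  obtain ⟨m, rfl⟩ : ∃ m, p = m + 1 := ⟨p - 1, by omega⟩
  simp only [Nat.add_sub_cancel] at *
  have hka : k * a = m := by rw [hk, Nat.div_mul_cancel hdvd]
  have hk1 : 1 ≤ k := by
    rcases Nat.eq_zero_or_pos k with h | h
    · rw [h, zero_mul] at hka; omega
    · exact h
  have hr : i % k < k := Nat.mod_lt _ hk1
  have hq : i / k ≤ a := by
    have := Nat.div_le_div_right (c := k) (by omega : i ≤ k * a)
    rwa [Nat.mul_div_cancel_left _ hk1] at this
  have hik : i = i / k * k + i % k := by
    rw [Nat.div_add_mod' i k]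
  set q := i / k with hqdef
  set r := i % k with hrdef
  have hmul : (r + 1) * a ≤ k * a := Nat.mul_le_mul_right a (by omega)
  apply Nat.div_eq_of_lt_le
  · nlinarith [hik, hka, hq, hr]
  · nlinarith [hik, hka, hq, hr, hmul]
end

section
/- Let p be a prime, t = p·t₀ + a with 0 ≤ a ≤ p−1, and suppose a ∣ p−1 with a ≥ 1. Define ν_i = ⌊(a + i·t)/p⌋ for 0 ≤ i ≤ p−1. Then ν_i = i·t₀ + ⌊i/k⌋ where k = (p−1)/a. -/
theorem stmt_1 (p a t₀ t k : ℕ) (hp : p.Prime) (ha1 : 1 ≤ a) (ha2 : a ≤ p - 1)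
    (hdvd : a ∣ p - 1) (ht : t = p * t₀ + a) (hk : k = (p - 1) / a)
    (ν : ℕ → ℕ) (hν : ∀ i, ν i = (a + i * t) / p) :
    ∀ i ≤ p - 1, ν i = i * t₀ + i / k := by
  have hp2 : 2 ≤ p := hp.two_le
  have hak : a * k = p - 1 := by
    rw [hk]; exact Nat.mul_div_cancel' hdvd
  have hk1 : 1 ≤ k := by
    rcases Nat.eq_zero_or_pos k with h | h
    · subst h; simp at hak; omega
    · exact h
  intro i hi
  rw [hν, ht]
  have h1 : a + i * (p * t₀ + a) = a * (i + 1) + i * t₀ * p := by ring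
  rw [h1, Nat.add_mul_div_right _ _ (by omega : 0 < p), Nat.add_comm]
  congr 1
  set q := i / k with hq
  set r := i % k with hr
  have hiq : k * q + r = i := Nat.div_add_mod i k
  have hrk : r < k := Nat.mod_lt i (by omega)
  have hqa : q ≤ a := by
    have : i ≤ a * k := by omega
    calc q = i / k := rfl
      _ ≤ (a * k) / k := Nat.div_le_div_right this
      _ = a := Nat.mul_div_cancel a (by omega)
  have hp1 : a * k + 1 = p := by omega
  have he : a * (i + 1) = a * k * q + a * (r + 1) := by rw [← hiq]; ring
  have hpq : p * q = a * k * q + q := by rw [← hp1]; ring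
  have hpq1 : p * (q + 1) = a * k * q + a * k + q + 1 := by rw [← hp1]; ring
  have har : a ≤ a * (r + 1) := Nat.le_mul_of_pos_right a (by omega)
  have hlow : p * q ≤ a * (i + 1) := by
    rw [he, hpq]; omega
  have hhigh : a * (i + 1) < p * (q + 1) := by
    rcases eq_or_lt_of_le hqa with h | h
    · have hr0 : r = 0 := by nlinarith
      rw [he, hpq1, hr0, ← h]; omega
    · have hrle : a * (r + 1) ≤ a * k := Nat.mul_le_mul_left a (by omega)
      rw [he, hpq1]; linarith
  refine Nat.div_eq_of_lt_le ?_ ?_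
  · rw [Nat.mul_comm]; exact hlow
  · linarith [Nat.mul_comm a (i+1), Nat.mul_comm p (q+1)]
end

section
/- Let p be a prime, t = p·t₀ + a with 1 ≤ a ≤ p−1 and t₀ ≥ 0, let e be an integer with e ≥ a + (p−1)·t₀, and define ν_i = ⌊(a + i·t)/p⌋. If a ∣ p−1, then for all i with 0 ≤ i ≤ p−1, we have e·i − (p−1)·ν_i ≥ 0; consequently min_{0 ≤ i ≤ p−1}(e·i − (p−1)·ν_i) = 0. -/
theorem stmt_2 (p a t₀ t : ℕ) (e : ℤ) (hp : p.Prime) (ha1 : 1 ≤ a) (ha2 : a ≤ p - 1)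
    (hdvd : a ∣ p - 1) (ht : t = p * t₀ + a)
    (he : (a : ℤ) + ((p : ℤ) - 1) * (t₀ : ℤ) ≤ e)
    (ν : ℕ → ℕ) (hν : ∀ i, ν i = (a + i * t) / p) :
    (∀ i ≤ p - 1, 0 ≤ e * (i : ℤ) - ((p : ℤ) - 1) * (ν i : ℤ)) ∧
    (Finset.range p).inf' (Finset.nonempty_range_iff.mpr hp.pos.ne')
      (fun i => e * (i : ℤ) - ((p : ℤ) - 1) * (ν i : ℤ)) = 0 := by
  obtain ⟨m, hm⟩ := hdvd
  have hp2 : 2 ≤ p := hp.two_le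
  have hap : a < p := by omega
  have hν' : ∀ i, ν i = i * t₀ + a * (i + 1) / p := by
    intro i
    rw [hν, ht]
    have h : a + i * (p * t₀ + a) = p * (i * t₀) + a * (i + 1) := by ring
    rw [h, Nat.mul_add_div hp.pos]
  have key : ∀ i ≤ p - 1, (p - 1) * (a * (i + 1) / p) ≤ a * i := by
    intro i hi
    set q := a * (i + 1) / p with hq
    have h1 : q * p ≤ a * (i + 1) := Nat.div_mul_le_self _ _
    rcases Nat.eq_zero_or_pos q with h0 | h0
    · simp [h0]
    · have hp1 : p = a * m + 1 := by omega
      have hmq : m * q ≤ i := by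
        by_contra h
        push_neg at h
        have h2 : a * (i + 1) ≤ a * (m * q) := Nat.mul_le_mul_left a h
        nlinarith
      calc (p - 1) * q = a * (m * q) := by rw [hm]; ring
        _ ≤ a * i := Nat.mul_le_mul_left a hmq
  have main : ∀ i ≤ p - 1, 0 ≤ e * (i : ℤ) - ((p : ℤ) - 1) * (ν i : ℤ) := by
    intro i hi
    have h2 := key i hi
    rw [hν' i]
    have hc : ((p : ℤ) - 1) * ((a * (i + 1) / p : ℕ) : ℤ) ≤ (a : ℤ) * i := by
      have h3 := (Nat.cast_le (α := ℤ)).2 h2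
      push_cast [Nat.cast_sub hp.one_le] at h3
      convert h3 using 2 <;> push_cast <;> rfl
    have hei : ((a : ℤ) + ((p : ℤ) - 1) * t₀) * i ≤ e * i :=
      mul_le_mul_of_nonneg_right he (by positivity)
    rw [Nat.cast_add, Nat.cast_mul]
    nlinarith
  refine ⟨main, le_antisymm ?_ ?_⟩
  · have h0 : (0 : ℕ) ∈ Finset.range p := Finset.mem_range.mpr hp.pos
    have := Finset.inf'_le (fun i : ℕ => e * (i : ℤ) - ((p : ℤ) - 1) * (ν i : ℤ)) h0
    have hν0 : ν 0 = 0 := by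
      rw [hν' 0]
      simp [Nat.div_eq_of_lt hap]
    exact this.trans_eq (by simp [hν0])
  · apply Finset.le_inf'
    intro i hi
    have hi' := Finset.mem_range.mp hi
    exact main i (by omega)
end

section
/- Let p be a prime, t = p·t₀ + a with 1 ≤ a ≤ p−1, and define ν_i = ⌊(a + i·t)/p⌋. If a ∣ p−1, then ν is superadditive on {0,…,p−1}: for all i, j ≥ 0 with i + j ≤ p−1, we have ν_{i+j} ≥ ν_i + ν_j. -/
theorem stmt_3 (p a t₀ t : ℕ) (hp : p.Prime) (ha1 : 1 ≤ a) (ha2 : a ≤ p - 1)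
    (hdvd : a ∣ p - 1) (ht : t = p * t₀ + a)
    (ν : ℕ → ℕ) (hν : ∀ i, ν i = (a + i * t) / p) :
    ∀ i j : ℕ, i + j ≤ p - 1 → ν i + ν j ≤ ν (i + j) := by
  have hp2 : 2 ≤ p := hp.two_le
  obtain ⟨m, hm⟩ := hdvd
  have hpam : p = a * m + 1 := by omega
  have hm1 : 1 ≤ m := by nlinarith
  have hp0 : 0 < p := by omega
  -- key: a*k/p = (k-1)/m for 1 ≤ k ≤ p
  have key : ∀ k, 1 ≤ k → k ≤ p → a * k / p = (k - 1) / m := by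
    intro k hk1 hkp
    obtain ⟨k', rfl⟩ : ∃ k', k = k' + 1 := ⟨k - 1, by omega⟩
    simp only [Nat.add_sub_cancel]
    set q := k' / m with hq
    have hq1 : q * m ≤ k' := Nat.div_mul_le_self _ _
    have hq2 : k' < (q + 1) * m := by
      have h := Nat.div_add_mod k' m
      have h2 := Nat.mod_lt k' (by omega : 0 < m)
      have h3 : (k' / m + 1) * m = m * (k' / m) + m := by ring
      rw [hq]; omega
    have hqa : q ≤ a := by
      have h1 : q ≤ a * m / m := Nat.div_le_div_right (by omega)
      rwa [Nat.mul_div_cancel _ (by omega : 0 < m)] at h1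
    apply Nat.div_eq_of_lt_le
    · have := Nat.mul_le_mul_left a hq1
      nlinarith
    · have : k' + 1 ≤ (q + 1) * m := by omega
      have := Nat.mul_le_mul_left a this
      nlinarith
  -- ν i = i * t₀ + a*(i+1)/p
  have hν' : ∀ i, ν i = i * t₀ + a * (i + 1) / p := by
    intro i
    have h1 : a + i * t = p * (i * t₀) + a * (i + 1) := by rw [ht]; ring
    rw [hν, h1, Nat.mul_add_div hp0]
  intro i j hij
  rw [hν' i, hν' j, hν' (i + j)]
  rw [key (i + 1) (by omega) (by omega), key (j + 1) (by omega) (by omega),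
      key (i + j + 1) (by omega) (by omega)]
  simp only [Nat.add_sub_cancel]
  have hsub : i / m + j / m ≤ (i + j) / m := by
    rw [Nat.le_div_iff_mul_le (by omega : 0 < m)]
    have := Nat.div_mul_le_self i m
    have := Nat.div_mul_le_self j m
    nlinarith
  have hdist : (i + j) * t₀ = i * t₀ + j * t₀ := by ring
  omega
end

section
/- Let p be a prime and a an integer with 1 ≤ a ≤ p−1. Define ν̃_i = ⌊a(i+1)/p⌋ for 0 ≤ i ≤ p−1. Suppose ν̃ is superadditive: ν̃_{i+j} ≥ ν̃_i + ν̃_j for all i, j ≥ 0 with i + j ≤ p−1. Then a divides p−1. -/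
theorem stmt_4 (p a : ℕ) (hp : p.Prime) (ha1 : 1 ≤ a) (ha2 : a ≤ p - 1)
    (ν : ℕ → ℕ) (hν : ∀ i, ν i = a * (i + 1) / p)
    (hsuper : ∀ i j : ℕ, i + j ≤ p - 1 → ν i + ν j ≤ ν (i + j)) :
    a ∣ p - 1 := by
  rcases Nat.eq_or_lt_of_le ha1 with h1 | h1
  · exact h1 ▸ one_dvd _
  have hp2 : 2 ≤ p := hp.two_le
  have hap : a < p := by omega
  have hnd : ¬ a ∣ p := by
    intro h
    rcases hp.eq_one_or_self_of_dvd a h with h' | h' <;> omega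
  have hm1 : 1 ≤ p % a :=
    Nat.one_le_iff_ne_zero.mpr (fun h => hnd (Nat.dvd_of_mod_eq_zero h))
  have hma : p % a < a := Nat.mod_lt _ (by omega)
  have hqm : a * (p / a) + p % a = p := Nat.div_add_mod p a
  set q := p / a with hqdef
  set m := p % a with hmdef
  have hνq : ν q = 1 := by
    rw [hν]
    have h2 : a * (q + 1) = p + (a - m) := by
      have h3 : a * (q + 1) = a * q + a := by ring
      omega
    rw [h2, add_comm, Nat.add_div_right _ (by omega : 0 < p),
      Nat.div_eq_of_lt (by omega : a - m < p)]
  have key : ∀ k, k ≤ a → 1 ≤ k → k ≤ ν (k * q) := by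
    intro k
    induction k with
    | zero => omega
    | succ n ih =>
      intro hka _
      rcases Nat.eq_zero_or_pos n with hn | hn
      · subst hn; simp [hνq]
      · have ihn : n ≤ ν (n * q) := ih (by omega) hn
        have hbound : n * q + q ≤ p - 1 := by
          have : (n + 1) * q ≤ a * q := Nat.mul_le_mul_right q hka
          have h3 : (n + 1) * q = n * q + q := by ring
          omega
        have hs := hsuper (n * q) q hbound
        have h3 : n * q + q = (n + 1) * q := by ring
        rw [h3] at hs
        omega
  have hk := key a le_rfl (by omega)
  rw [hν] at hk
  have hmul : a * p ≤ a * (a * q + 1) :=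
    (Nat.le_div_iff_mul_le (by omega : 0 < p)).mp hk
  have hle : p ≤ a * q + 1 := Nat.le_of_mul_le_mul_left hmul (by omega)
  exact ⟨q, by omega⟩
end

section
/- Let G = ⟨σ⟩ be a cyclic group of prime order p, R a commutative ring, and f = σ − 1 ∈ R[G]. Then (1, f, f², …, f^{p−1}) is an R-basis of R[G], and f^p = −∑_{j=1}^{p−1} binom(p, j) f^j in R[G]. -/
theorem stmt_13 (p : ℕ) (hp : p.Prime) (G : Type*) [Group G] (σ : G)
    (hord : orderOf σ = p) (hgen : ∀ g : G, g ∈ Subgroup.zpowers σ)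
    (R : Type*) [CommRing R] :
    (∃ b : Module.Basis (Fin p) R (MonoidAlgebra R G), ∀ i : Fin p,
        b i = (MonoidAlgebra.of R G σ - 1) ^ (i : ℕ)) ∧
    (MonoidAlgebra.of R G σ - 1) ^ p
      = -∑ j ∈ Finset.Icc 1 (p - 1),
          (p.choose j : R) • ((MonoidAlgebra.of R G σ - 1) ^ j) := by
  have hp1 : 0 < p := hp.pos
  set f : MonoidAlgebra R G := MonoidAlgebra.of R G σ - 1 with hf
  have hf1 : f + 1 = MonoidAlgebra.of R G σ := by rw [hf]; abel
  -- the bijection Fin p ≃ G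
  have hinj : Function.Injective (fun i : Fin p => σ ^ (i : ℕ)) := by
    intro i j hij
    exact Fin.ext (pow_injOn_Iio_orderOf (by simpa [hord] using i.2)
      (by simpa [hord] using j.2) hij)
  have hsurj : Function.Surjective (fun i : Fin p => σ ^ (i : ℕ)) := by
    intro g
    obtain ⟨k, hk⟩ := Subgroup.mem_zpowers_iff.mp (hgen g)
    have hpz : (0 : ℤ) < (p : ℤ) := by exact_mod_cast hp1
    refine ⟨⟨(k % (p : ℤ)).toNat, ?_⟩, ?_⟩
    · have := Int.emod_lt_of_pos k hpz
      omega
    · have hnn : 0 ≤ k % (p : ℤ) := Int.emod_nonneg k (by omega)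
      have : σ ^ ((k % (p : ℤ)).toNat : ℤ) = σ ^ k := by
        rw [Int.toNat_of_nonneg hnn, ← hord, zpow_mod_orderOf]
      show σ ^ (k % (p : ℤ)).toNat = g
      rw [← zpow_natCast σ, this, hk]
  let e : Fin p ≃ G := Equiv.ofBijective _ ⟨hinj, hsurj⟩
  let b0 : Module.Basis (Fin p) R (MonoidAlgebra R G) := (MonoidAlgebra.basis G R).reindex e.symm
  have hb0 : ∀ i : Fin p, b0 i = (MonoidAlgebra.of R G σ) ^ (i : ℕ) := by
    intro i
    rw [← map_pow]
    erw [Module.Basis.reindex_apply, Equiv.symm_symm]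
    rfl
  have hσp : (MonoidAlgebra.of R G σ) ^ p = 1 := by
    rw [← map_pow, ← hord, pow_orderOf_eq_one, map_one]
  -- spanning
  have hspan : ∀ n : ℕ, n < p → (MonoidAlgebra.of R G σ) ^ n ∈
      Submodule.span R (Set.range fun j : Fin p => f ^ (j : ℕ)) := by
    intro n hn
    rw [← hf1, Commute.add_pow (Commute.one_right f)]
    refine Submodule.sum_mem _ (fun k hk => ?_)
    rw [Finset.mem_range] at hk
    have hkp : k < p := by omega
    rw [one_pow, mul_one, ← (Nat.cast_commute (n.choose k) (f ^ k)).eq, ← nsmul_eq_mul]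
    have hmem : f ^ k ∈ Set.range fun j : Fin p => f ^ (j : ℕ) := ⟨⟨k, hkp⟩, rfl⟩
    exact nsmul_mem (Submodule.subset_span hmem) _
  have hspan_top : Submodule.span R (Set.range fun j : Fin p => f ^ (j : ℕ)) = ⊤ := by
    rw [eq_top_iff, ← b0.span_eq]
    refine Submodule.span_le.mpr ?_
    rintro x ⟨i, rfl⟩
    rw [hb0 i]
    exact hspan i i.2
  -- the endomorphism
  haveI : Module.Finite R (MonoidAlgebra R G) := Module.Finite.of_basis b0
  let A := b0.constr ℕ (fun i : Fin p => f ^ (i : ℕ))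
  have hAsurj : Function.Surjective A := by
    rw [← LinearMap.range_eq_top, Module.Basis.constr_range]
    exact hspan_top
  have hAinj : Function.Injective A :=
    OrzechProperty.injective_of_surjective_endomorphism A hAsurj
  let E := LinearEquiv.ofBijective A ⟨hAinj, hAsurj⟩
  constructor
  · refine ⟨b0.map E, fun i => ?_⟩
    rw [Module.Basis.map_apply]
    show A (b0 i) = f ^ (i : ℕ)
    exact b0.constr_basis ℕ _ i
  · -- the relation
    have key : ∑ k ∈ Finset.range (p + 1),
        f ^ k * 1 ^ (p - k) * (p.choose k : MonoidAlgebra R G) = 1 := by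
      rw [← Commute.add_pow (Commute.one_right f), hf1, hσp]
    have hterm : ∀ j, f ^ j * 1 ^ (p - j) * (p.choose j : MonoidAlgebra R G)
        = (p.choose j : R) • f ^ j := by
      intro j
      rw [one_pow, mul_one, ← (Nat.cast_commute (p.choose j) (f ^ j)).eq, ← nsmul_eq_mul,
        ← Nat.cast_smul_eq_nsmul R]
    have h0 : f ^ 0 * 1 ^ (p - 0) * (p.choose 0 : MonoidAlgebra R G) = 1 := by simp
    have hpp : f ^ p * 1 ^ (p - p) * (p.choose p : MonoidAlgebra R G) = f ^ p := by simp
    rw [Finset.sum_range_succ, Finset.range_eq_Ico, Finset.sum_eq_sum_Ico_succ_bot hp1,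
      h0, hpp, add_assoc] at key
    have key2 := add_left_cancel (key.trans (add_zero (1 : MonoidAlgebra R G)).symm)
    have hfin := eq_neg_of_add_eq_zero_right key2
    have hIcc : Finset.Icc 1 (p - 1) = Finset.Ico (0 + 1) p := by
      rw [← Finset.Ico_add_one_right_eq_Icc]
      congr 1 <;> omega
    rw [hIcc, Finset.sum_congr rfl (fun j _ => (hterm j).symm)]
    exact hfin
end

section
/- Let L/K be a ramified cyclic extension of p-adic fields of degree p with ramification jump t not divisible by p, and let a = t mod p, σ a generator of Gal(L/K), f = σ − 1. Then for 0 ≤ i ≤ p−1, v_L(f^i(π_L^a)) = a + i·t, where π_L is a uniformizer of L. -/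
/-- Prop 5.8(3): in a ramified cyclic degree-`p` extension with ramification jump `t`,
`p ∤ t`, one has `v_L(f^i(π_L^a)) = a + i t` for `0 ≤ i ≤ p-1`, where `f = σ - 1`. -/
theorem stmt_14 (p : ℕ) (hp : p.Prime) (K L : Type*) [Field K] [Field L] [Algebra K L]
    [FiniteDimensional K L] (hdeg : Module.finrank K L = p)
    (σ : L ≃ₐ[K] L) (hord : orderOf σ = p)
    (v : AddValuation L (WithTop ℤ))
    (hsurj : ∀ m : ℤ, ∃ x : L, v x = (m : WithTop ℤ))
    (htot : ∀ c : K, c ≠ 0 → ∃ m : ℤ, v (algebraMap K L c) = ((p * m : ℤ) : WithTop ℤ))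
    (πL : L) (hπ : v πL = ((1 : ℤ) : WithTop ℤ))
    (t : ℕ) (ht1 : 1 ≤ t) (hpt : ¬ (p ∣ t))
    (hGt : ∀ x : L, (0 : WithTop ℤ) ≤ v x → (((t : ℤ) + 1 : ℤ) : WithTop ℤ) ≤ v (σ x - x))
    (hjump : v (σ πL - πL) = (((t : ℤ) + 1 : ℤ) : WithTop ℤ))
    (a : ℕ) (ha : a = t % p) :
    ∀ i ≤ p - 1,
      v ((fun x : L => σ x - x)^[i] (πL ^ a)) = (((a : ℤ) + (i : ℤ) * (t : ℤ)) : WithTop ℤ) := by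
  -- basic facts
  have hπ0 : πL ≠ 0 := by
    intro h
    rw [h, v.map_zero] at hπ
    exact (WithTop.coe_ne_top (a := (1 : ℤ))) hπ.symm
  set ε : L := σ πL - πL with hε
  have hvε : v ε = (((t : ℤ) + 1 : ℤ) : WithTop ℤ) := hjump
  have hnat : ∀ n : ℕ, (0 : WithTop ℤ) ≤ v (n : L) := by
    intro n
    induction n with
    | zero => simp
    | succ k ih =>
      have h1 : ((k + 1 : ℕ) : L) = (k : L) + 1 := by push_cast; ring
      rw [h1]
      exact v.map_le_add ih (by rw [v.map_one])
  have hint : ∀ n : ℤ, (0 : WithTop ℤ) ≤ v (n : L) := by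
    intro n
    obtain ⟨m, rfl | rfl⟩ := n.eq_nat_or_neg
    · exact_mod_cast hnat m
    · have : (((-(m : ℤ)) : ℤ) : L) = -((m : ℕ) : L) := by push_cast; ring
      rw [this, v.map_neg]
      exact hnat m
  have hvσπ : v (σ πL) = ((1 : ℤ) : WithTop ℤ) := by
    have h1 : σ πL = πL + ε := by rw [hε]; ring
    rw [h1, v.map_add_eq_of_lt_left]
    · exact hπ
    · rw [hπ, hvε]
      exact_mod_cast (by omega : (1 : ℤ) < (t : ℤ) + 1)
  have hpow : ∀ (x : L) (c : ℤ), v x = (c : WithTop ℤ) → ∀ m : ℕ,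
      v (x ^ m) = ((m * c : ℤ) : WithTop ℤ) := by
    intro x c hx m
    induction m with
    | zero => simpa using v.map_one
    | succ k ih =>
      rw [pow_succ, v.map_mul, ih, hx, ← WithTop.coe_add]
      congr 1
      push_cast
      ring
  have hσz : ∀ z : L, (((t : ℤ) + 1 : ℤ) : WithTop ℤ) ≤ v z →
      (((t : ℤ) + 1 : ℤ) : WithTop ℤ) ≤ v (σ z) := by
    intro z hz
    have h0z : (0 : WithTop ℤ) ≤ v z :=
      le_trans (by exact_mod_cast (by omega : (0 : ℤ) ≤ (t : ℤ) + 1)) hz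
    have h1 : σ z = z + (σ z - z) := by ring
    rw [h1]
    exact v.map_le_add hz (hGt z h0z)
  -- the leading-term invariant for f(π^m)
  have hD : ∀ m : ℕ,
      ((((m : ℤ) + 2 * (t : ℤ)) : ℤ) : WithTop ℤ) ≤
        v ((σ (πL ^ m) - πL ^ m) - (m : L) * πL ^ (m - 1) * ε) ∧
      ((((m : ℤ) + (t : ℤ)) : ℤ) : WithTop ℤ) ≤ v (σ (πL ^ m) - πL ^ m) := by
    intro m
    induction m with
    | zero => simp
    | succ k ih =>
      have hσsucc : σ (πL ^ (k + 1)) = σ (πL ^ k) * (πL + ε) := by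
        have : σ πL = πL + ε := by rw [hε]; ring
        rw [← this, ← map_mul, ← pow_succ]
      have hmain : ((((k : ℤ) + 1 + 2 * (t : ℤ)) : ℤ) : WithTop ℤ) ≤
          v ((σ (πL ^ (k + 1)) - πL ^ (k + 1)) - ((k + 1 : ℕ) : L) * πL ^ k * ε) := by
        have hsplit : (σ (πL ^ (k + 1)) - πL ^ (k + 1)) - ((k + 1 : ℕ) : L) * πL ^ k * ε
            = (σ (πL ^ k) - πL ^ k) * ε
              + ((σ (πL ^ k) - πL ^ k) - (k : L) * πL ^ (k - 1) * ε) * πL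
              + ((k : L) * πL ^ (k - 1) * πL - (k : L) * πL ^ k) * ε := by
          rw [hσsucc]
          push_cast
          ring
        have hπk : (k : L) * πL ^ (k - 1) * πL = (k : L) * πL ^ k := by
          cases k with
          | zero => simp
          | succ j => rw [Nat.succ_sub_one, pow_succ]; ring
        rw [hsplit, hπk, sub_self, zero_mul, add_zero]
        have est1 : ((((k : ℤ) + 1 + 2 * (t : ℤ)) : ℤ) : WithTop ℤ) ≤
            v ((σ (πL ^ k) - πL ^ k) * ε) := by
          rw [v.map_mul, hvε]
          calc ((((k : ℤ) + 1 + 2 * (t : ℤ)) : ℤ) : WithTop ℤ)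
              ≤ ((((k : ℤ) + (t : ℤ)) : ℤ) : WithTop ℤ) + (((t : ℤ) + 1 : ℤ) : WithTop ℤ) := by
                rw [← WithTop.coe_add]
                exact_mod_cast (by omega : ((k : ℤ) + 1 + 2 * (t : ℤ)) ≤ ((k : ℤ) + (t : ℤ)) + ((t : ℤ) + 1))
            _ ≤ v (σ (πL ^ k) - πL ^ k) + (((t : ℤ) + 1 : ℤ) : WithTop ℤ) :=
                add_le_add_left ih.2 _
        have est2 : ((((k : ℤ) + 1 + 2 * (t : ℤ)) : ℤ) : WithTop ℤ) ≤
            v (((σ (πL ^ k) - πL ^ k) - (k : L) * πL ^ (k - 1) * ε) * πL) := by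
          rw [v.map_mul, hπ]
          calc ((((k : ℤ) + 1 + 2 * (t : ℤ)) : ℤ) : WithTop ℤ)
              = ((((k : ℤ) + 2 * (t : ℤ)) : ℤ) : WithTop ℤ) + ((1 : ℤ) : WithTop ℤ) := by
                exact_mod_cast (by ring : ((k : ℤ) + 1 + 2 * (t : ℤ)) = ((k : ℤ) + 2 * (t : ℤ)) + 1)
            _ ≤ v ((σ (πL ^ k) - πL ^ k) - (k : L) * πL ^ (k - 1) * ε) + ((1 : ℤ) : WithTop ℤ) :=
                add_le_add_left ih.1 _
        exact v.map_le_add est1 est2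
      constructor
      · convert hmain using 2 <;> (push_cast; ring)
      · -- second bound
        have hdecomp : σ (πL ^ (k + 1)) - πL ^ (k + 1)
            = ((k + 1 : ℕ) : L) * πL ^ k * ε
              + ((σ (πL ^ (k + 1)) - πL ^ (k + 1)) - ((k + 1 : ℕ) : L) * πL ^ k * ε) := by
          ring
        rw [hdecomp]
        have estA : ((((k : ℤ) + 1 + (t : ℤ)) : ℤ) : WithTop ℤ) ≤
            v (((k + 1 : ℕ) : L) * πL ^ k * ε) := by
          rw [v.map_mul, v.map_mul, hpow πL 1 hπ k, hvε]
          calc ((((k : ℤ) + 1 + (t : ℤ)) : ℤ) : WithTop ℤ)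
              ≤ ((0 : ℤ) : WithTop ℤ) + (((k : ℤ) * 1 : ℤ) : WithTop ℤ) + (((t : ℤ) + 1 : ℤ) : WithTop ℤ) := by
                exact_mod_cast (by omega : ((k : ℤ) + 1 + (t : ℤ)) ≤ (0 : ℤ) + (k : ℤ) * 1 + ((t : ℤ) + 1))
            _ ≤ v (((k + 1 : ℕ) : L)) + (((k : ℤ) * 1 : ℤ) : WithTop ℤ) + (((t : ℤ) + 1 : ℤ) : WithTop ℤ) := by
                apply add_le_add_left
                apply add_le_add_left
                exact hnat (k + 1)
        have estB : ((((k : ℤ) + 1 + (t : ℤ)) : ℤ) : WithTop ℤ) ≤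
            v ((σ (πL ^ (k + 1)) - πL ^ (k + 1)) - ((k + 1 : ℕ) : L) * πL ^ k * ε) := by
          refine le_trans ?_ hmain
          exact_mod_cast (by omega : ((k : ℤ) + 1 + (t : ℤ)) ≤ ((k : ℤ) + 1 + 2 * (t : ℤ)))
        have := v.map_le_add estA estB
        convert this using 2 <;> (push_cast; ring)
  -- v(p) ≥ 1
  set θ : L := ε * πL⁻¹ with hθ
  have hθπ : θ * πL = ε := by
    rw [hθ]
    field_simp
  have hvθ : v θ = ((t : ℤ) : WithTop ℤ) := by
    have h := (v.map_mul θ πL).symm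
    rw [hθπ, hvε, hπ] at h
    rcases eq_or_ne (v θ) ⊤ with h' | h'
    · rw [h', top_add] at h
      exact absurd h.symm (WithTop.coe_ne_top)
    · obtain ⟨c, hc⟩ := WithTop.ne_top_iff_exists.mp h'
      rw [← hc] at h ⊢
      have h2 : c + 1 = (t : ℤ) + 1 := by exact_mod_cast h
      exact_mod_cast (by omega : c = (t : ℤ))
  have hdiff : ∀ j : ℕ, (((t : ℤ) + 1 : ℤ) : WithTop ℤ) ≤ v ((σ ^ j) θ - θ) := by
    intro j
    induction j with
    | zero => simp
    | succ k ih =>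
      have happ : (σ ^ (k + 1)) θ = σ ((σ ^ k) θ) := by rw [pow_succ']; rfl
      have key : (σ ^ (k + 1)) θ - θ = σ ((σ ^ k) θ - θ) + (σ θ - θ) := by
        rw [map_sub, happ]
        ring
      rw [key]
      refine v.map_le_add (hσz _ ih) (hGt θ ?_)
      rw [hvθ]
      exact_mod_cast Int.ofNat_nonneg t
  have hθjv : ∀ j : ℕ, ((t : ℤ) : WithTop ℤ) ≤ v ((σ ^ j) θ) := by
    intro j
    have h1 : (σ ^ j) θ = θ + ((σ ^ j) θ - θ) := by ring
    rw [h1]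
    refine v.map_le_add (le_of_eq hvθ.symm) (le_trans ?_ (hdiff j))
    exact_mod_cast (by omega : (t : ℤ) ≤ (t : ℤ) + 1)
  have hPtel : ∀ n : ℕ,
      (∏ j ∈ Finset.range n, (1 + (σ ^ j) θ)) * πL = (σ ^ n) πL := by
    intro n
    induction n with
    | zero => simp
    | succ k ih =>
      rw [Finset.prod_range_succ]
      have hterm : (1 + (σ ^ k) θ) * (σ ^ k) πL = (σ ^ (k + 1)) πL := by
        have h1 : (σ ^ k) θ * (σ ^ k) πL = (σ ^ k) ε := by
          rw [← map_mul, hθπ]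
        have h2 : (σ ^ (k + 1)) πL = (σ ^ k) (σ πL) := by rw [pow_succ]; rfl
        have h3 : (σ ^ k) (σ πL) = (σ ^ k) πL + (σ ^ k) ε := by
          have h4 : σ πL = πL + ε := by rw [hε]; ring
          rw [← map_add, ← h4]
        rw [h2, h3, add_mul, one_mul, h1]
      calc (∏ j ∈ Finset.range k, (1 + (σ ^ j) θ)) * (1 + (σ ^ k) θ) * πL
          = (1 + (σ ^ k) θ) * ((∏ j ∈ Finset.range k, (1 + (σ ^ j) θ)) * πL) := by ring
        _ = (1 + (σ ^ k) θ) * (σ ^ k) πL := by rw [ih]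
        _ = (σ ^ (k + 1)) πL := hterm
  have hPp : (∏ j ∈ Finset.range p, (1 + (σ ^ j) θ)) = 1 := by
    have h1 : (σ ^ p) πL = πL := by
      rw [← hord, pow_orderOf_eq_one]
      rfl
    have h2 := hPtel p
    rw [h1] at h2
    have h3 : (∏ j ∈ Finset.range p, (1 + (σ ^ j) θ)) * πL = 1 * πL := by
      rw [h2, one_mul]
    exact mul_right_cancel₀ hπ0 h3
  have hE : ∀ n : ℕ, (((2 * (t : ℤ)) : ℤ) : WithTop ℤ) ≤
      v ((∏ j ∈ Finset.range n, (1 + (σ ^ j) θ)) - 1 - ∑ j ∈ Finset.range n, (σ ^ j) θ) := by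
    intro n
    induction n with
    | zero => simp
    | succ k ih =>
      have hid : (∏ j ∈ Finset.range (k + 1), (1 + (σ ^ j) θ)) - 1
            - ∑ j ∈ Finset.range (k + 1), (σ ^ j) θ
          = ((∏ j ∈ Finset.range k, (1 + (σ ^ j) θ)) - 1 - ∑ j ∈ Finset.range k, (σ ^ j) θ)
              * (1 + (σ ^ k) θ)
            + (∑ j ∈ Finset.range k, (σ ^ j) θ) * (σ ^ k) θ := by
        rw [Finset.prod_range_succ, Finset.sum_range_succ]
        ring
      rw [hid]
      have h1θ : (0 : WithTop ℤ) ≤ v (1 + (σ ^ k) θ) := by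
        refine v.map_le_add (by rw [v.map_one]) (le_trans ?_ (hθjv k))
        exact_mod_cast Int.ofNat_nonneg t
      have est1 : (((2 * (t : ℤ)) : ℤ) : WithTop ℤ) ≤
          v (((∏ j ∈ Finset.range k, (1 + (σ ^ j) θ)) - 1 - ∑ j ∈ Finset.range k, (σ ^ j) θ)
            * (1 + (σ ^ k) θ)) := by
        rw [v.map_mul]
        calc (((2 * (t : ℤ)) : ℤ) : WithTop ℤ)
            = (((2 * (t : ℤ)) : ℤ) : WithTop ℤ) + (0 : WithTop ℤ) := by rw [add_zero]
          _ ≤ _ := add_le_add ih h1θ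
      have hS : ((t : ℤ) : WithTop ℤ) ≤ v (∑ j ∈ Finset.range k, (σ ^ j) θ) :=
        v.map_le_sum fun j _ => hθjv j
      have est2 : (((2 * (t : ℤ)) : ℤ) : WithTop ℤ) ≤
          v ((∑ j ∈ Finset.range k, (σ ^ j) θ) * (σ ^ k) θ) := by
        rw [v.map_mul]
        calc (((2 * (t : ℤ)) : ℤ) : WithTop ℤ)
            = ((t : ℤ) : WithTop ℤ) + ((t : ℤ) : WithTop ℤ) := by
              rw [← WithTop.coe_add]
              exact_mod_cast (by ring : (2 * (t : ℤ)) = (t : ℤ) + (t : ℤ))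
          _ ≤ _ := add_le_add hS (hθjv k)
      exact v.map_le_add est1 est2
  have hSp : (((t : ℤ) + 1 : ℤ) : WithTop ℤ) ≤ v (∑ j ∈ Finset.range p, (σ ^ j) θ) := by
    have h1 := hE p
    rw [hPp] at h1
    have h2 : (1 : L) - 1 - ∑ j ∈ Finset.range p, (σ ^ j) θ = -(∑ j ∈ Finset.range p, (σ ^ j) θ) := by
      ring
    rw [h2, v.map_neg] at h1
    refine le_trans ?_ h1
    exact_mod_cast (by omega : (t : ℤ) + 1 ≤ 2 * (t : ℤ))
  have hp1 : ((1 : ℤ) : WithTop ℤ) ≤ v ((p : ℕ) : L) := by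
    have hsum_diff : (((t : ℤ) + 1 : ℤ) : WithTop ℤ) ≤
        v (∑ j ∈ Finset.range p, ((σ ^ j) θ - θ)) :=
      v.map_le_sum fun j _ => hdiff j
    have hpθ : ((p : ℕ) : L) * θ
        = (∑ j ∈ Finset.range p, (σ ^ j) θ) - ∑ j ∈ Finset.range p, ((σ ^ j) θ - θ) := by
      rw [Finset.sum_sub_distrib, Finset.sum_const, Finset.card_range, nsmul_eq_mul]
      ring
    have h := v.map_le_sub hSp hsum_diff
    rw [← hpθ, v.map_mul, hvθ] at h
    rcases eq_or_ne (v ((p : ℕ) : L)) ⊤ with h' | h'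
    · rw [h']
      exact le_top
    · obtain ⟨c, hc⟩ := WithTop.ne_top_iff_exists.mp h'
      rw [← hc] at h ⊢
      rw [← WithTop.coe_add] at h
      have hct : (t : ℤ) + 1 ≤ c + (t : ℤ) := by exact_mod_cast h
      exact_mod_cast (by omega : (1 : ℤ) ≤ c)
  -- units: v(n) = 0 for p ∤ n
  have hunit : ∀ n : ℕ, ¬ p ∣ n → v ((n : ℕ) : L) = ((0 : ℤ) : WithTop ℤ) := by
    intro n hn
    have hc : IsCoprime (p : ℤ) (n : ℤ) := by
      rw [Int.isCoprime_iff_gcd_eq_one, Int.gcd_natCast_natCast]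
      exact hp.coprime_iff_not_dvd.mpr hn
    obtain ⟨x, y, hxy⟩ := hc
    have hone : (x : L) * ((p : ℕ) : L) + (y : L) * ((n : ℕ) : L) = 1 := by
      exact_mod_cast congrArg (Int.cast : ℤ → L) hxy
    have hnot : ¬ (((1 : ℤ) : WithTop ℤ) ≤ v ((n : ℕ) : L)) := by
      intro hge
      have h1 : ((1 : ℤ) : WithTop ℤ) ≤ v ((x : L) * ((p : ℕ) : L)) := by
        rw [v.map_mul]
        calc ((1 : ℤ) : WithTop ℤ) = (0 : WithTop ℤ) + ((1 : ℤ) : WithTop ℤ) := by rw [zero_add]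
          _ ≤ _ := add_le_add (hint x) hp1
      have h2 : ((1 : ℤ) : WithTop ℤ) ≤ v ((y : L) * ((n : ℕ) : L)) := by
        rw [v.map_mul]
        calc ((1 : ℤ) : WithTop ℤ) = (0 : WithTop ℤ) + ((1 : ℤ) : WithTop ℤ) := by rw [zero_add]
          _ ≤ _ := add_le_add (hint y) hge
      have h3 : ((1 : ℤ) : WithTop ℤ) ≤ v (1 : L) := by
        rw [← hone]
        exact v.map_le_add h1 h2
      rw [v.map_one] at h3
      have : (1 : ℤ) ≤ (0 : ℤ) := by exact_mod_cast h3
      omega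
    have hlt : v ((n : ℕ) : L) < ((1 : ℤ) : WithTop ℤ) := lt_of_not_ge hnot
    have hne : v ((n : ℕ) : L) ≠ ⊤ := (hlt.trans (WithTop.coe_lt_top 1)).ne
    obtain ⟨c, hc⟩ := WithTop.ne_top_iff_exists.mp hne
    rw [← hc] at hlt ⊢
    have h0 : (0 : WithTop ℤ) ≤ ((c : ℤ) : WithTop ℤ) := by rw [hc]; exact hnat n
    have hc1 : c < 1 := by exact_mod_cast hlt
    have hc0 : (0 : ℤ) ≤ c := by exact_mod_cast h0
    exact_mod_cast (by omega : c = (0 : ℤ))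
  -- v(f(π^m)) = m + t for p ∤ m, m ≥ 1
  have hDeq : ∀ m : ℕ, 1 ≤ m → ¬ p ∣ m →
      v (σ (πL ^ m) - πL ^ m) = ((((m : ℤ) + (t : ℤ)) : ℤ) : WithTop ℤ) := by
    intro m hm1 hmd
    have hA : v ((m : L) * πL ^ (m - 1) * ε) = ((((m : ℤ) + (t : ℤ)) : ℤ) : WithTop ℤ) := by
      rw [v.map_mul, v.map_mul, hunit m hmd, hpow πL 1 hπ (m - 1), hvε,
        ← WithTop.coe_add, ← WithTop.coe_add]
      congr 1
      have : ((m - 1 : ℕ) : ℤ) = (m : ℤ) - 1 := by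
        rw [Nat.cast_sub hm1]
        norm_num
      rw [this]
      ring
    have hd : σ (πL ^ m) - πL ^ m
        = (m : L) * πL ^ (m - 1) * ε + ((σ (πL ^ m) - πL ^ m) - (m : L) * πL ^ (m - 1) * ε) := by
      ring
    rw [hd, v.map_add_eq_of_lt_left]
    · exact hA
    · rw [hA]
      refine lt_of_lt_of_le ?_ (hD m).1
      exact_mod_cast (by omega : ((m : ℤ) + (t : ℤ)) < ((m : ℤ) + 2 * (t : ℤ)))
  -- key lemma
  have hkey : ∀ (y : L) (m : ℕ), 1 ≤ m → ¬ p ∣ m → v y = ((m : ℤ) : WithTop ℤ) →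
      v (σ y - y) = ((((m : ℤ) + (t : ℤ)) : ℤ) : WithTop ℤ) := by
    intro y m hm1 hmd hvy
    have hπm0 : πL ^ m ≠ 0 := pow_ne_zero m hπ0
    set u : L := y / πL ^ m with hu
    have hyu : y = πL ^ m * u := by
      rw [hu, mul_div_cancel₀ _ hπm0]
    have hvπm : v (πL ^ m) = ((m : ℤ) : WithTop ℤ) := by
      have := hpow πL 1 hπ m
      simpa using this
    have hvu : v u = ((0 : ℤ) : WithTop ℤ) := by
      have h1 : v y = v (πL ^ m) + v u := by rw [hyu, v.map_mul]
      rw [hvy, hvπm] at h1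
      have h2 : ((m : ℤ) : WithTop ℤ) + ((0 : ℤ) : WithTop ℤ) = ((m : ℤ) : WithTop ℤ) + v u := by
        rw [← h1, ← WithTop.coe_add]
        norm_num
      exact (WithTop.add_left_cancel (WithTop.coe_ne_top (a := (m : ℤ))) h2).symm
    have hfu : (((t : ℤ) + 1 : ℤ) : WithTop ℤ) ≤ v (σ u - u) := by
      refine hGt u ?_
      rw [hvu]
      norm_num
    have hdecomp : σ y - y = σ (πL ^ m) * (σ u - u) + (σ (πL ^ m) - πL ^ m) * u := by
      conv_lhs => rw [hyu]
      rw [map_mul]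
      ring
    have hvσπm : v (σ (πL ^ m)) = ((m : ℤ) : WithTop ℤ) := by
      rw [map_pow]
      have := hpow (σ πL) 1 hvσπ m
      simpa using this
    have est2 : v ((σ (πL ^ m) - πL ^ m) * u) = ((((m : ℤ) + (t : ℤ)) : ℤ) : WithTop ℤ) := by
      rw [v.map_mul, hDeq m hm1 hmd, hvu, ← WithTop.coe_add]
      norm_num
    have est1 : ((((m : ℤ) + (t : ℤ)) : ℤ) : WithTop ℤ) < v (σ (πL ^ m) * (σ u - u)) := by
      rw [v.map_mul, hvσπm]
      calc ((((m : ℤ) + (t : ℤ)) : ℤ) : WithTop ℤ)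
          < ((m : ℤ) : WithTop ℤ) + (((t : ℤ) + 1 : ℤ) : WithTop ℤ) := by
            rw [← WithTop.coe_add]
            exact_mod_cast (by omega : ((m : ℤ) + (t : ℤ)) < (m : ℤ) + ((t : ℤ) + 1))
        _ ≤ _ := add_le_add_right hfu _
    rw [hdecomp, v.map_add_eq_of_lt_right (by rw [est2]; exact est1)]
    exact est2
  -- facts about a
  have ha1 : 1 ≤ a := by
    rcases Nat.eq_zero_or_pos a with h | h
    · exfalso
      exact hpt (Nat.dvd_of_mod_eq_zero (by omega))
    · exact h
  -- main induction
  intro i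
  induction i with
  | zero =>
    intro _
    simp only [Function.iterate_zero, id_eq]
    rw [hpow πL 1 hπ a]
    congr 1
    push_cast
    ring
  | succ k ih =>
    intro hk
    have hk' : k ≤ p - 1 := le_trans (Nat.le_succ k) hk
    have IH := ih hk'
    set m : ℕ := a + k * t with hm
    have hm1 : 1 ≤ m := le_trans ha1 (Nat.le_add_right a (k * t))
    have hmnd : ¬ p ∣ m := by
      intro hdvd
      have hmod : (a + k * t) % p = ((k + 1) * t) % p := by
        have h1 := (Nat.mod_modEq t p).add_right (k * t)
        have h2 : t + k * t = (k + 1) * t := by ring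
        rw [ha]
        rw [h2] at h1
        exact h1
      have hdvd2 : p ∣ (k + 1) * t := by
        have h0 : (a + k * t) % p = 0 := Nat.mod_eq_zero_of_dvd hdvd
        apply Nat.dvd_of_mod_eq_zero
        rw [← hmod]
        exact h0
      rcases (Nat.Prime.dvd_mul hp).mp hdvd2 with h | h
      · have hp2 := hp.two_le
        have hkp : k + 1 < p := by omega
        have := Nat.le_of_dvd (by omega) h
        omega
      · exact hpt h
    have hvy : v ((fun x : L => σ x - x)^[k] (πL ^ a)) = ((m : ℤ) : WithTop ℤ) := by
      rw [IH, hm]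
      push_cast
      ring
    have hstep := hkey _ m hm1 hmnd hvy
    rw [Function.iterate_succ_apply']
    show v (σ ((fun x : L => σ x - x)^[k] (πL ^ a)) - (fun x : L => σ x - x)^[k] (πL ^ a)) = _
    rw [hstep]
    exact_mod_cast (by push_cast [hm]; ring :
      ((m : ℤ) + (t : ℤ) : ℤ) = ((a : ℤ) + ((k : ℤ) + 1) * (t : ℤ) : ℤ))
end

section
/- Let L/K be a ramified cyclic extension of p-adic fields of degree p with ramification jump t, p ∤ t, a = t mod p, and ν_i = ⌊(a + i·t)/p⌋. Then the elements π_K^{−ν_i}·f^i(π_L^a) for i = 0, …, p−1 have L-valuations that are exactly {0, 1, …, p−1} in some order, and hence form an 𝒪_K-basis of 𝒪_L. -/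
private lemma coe_cancel {m n : ℤ} {w : WithTop ℤ} (h : (m : WithTop ℤ) + w = (n : WithTop ℤ)) :
    w = ((n - m : ℤ) : WithTop ℤ) := by
  cases w with
  | top => simp at h
  | coe w =>
    rw [← WithTop.coe_add, WithTop.coe_inj] at h
    rw [WithTop.coe_inj]; omega

private lemma val_sum {L : Type*} [Field L] (v : AddValuation L (WithTop ℤ))
    {ι : Type*} (s : Finset ι) (y : ι → L)
    (h : ∀ i ∈ s, ∀ j ∈ s, v (y i) = v (y j) → v (y i) = ⊤ ∨ i = j) :
    v (∑ i ∈ s, y i) = s.inf (fun i => v (y i)) := by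
  classical
  induction s using Finset.induction_on with
  | empty => simp [AddValuation.map_zero]
  | @insert j s hj ih =>
    have ih' := ih (fun i hi k hk => h i (Finset.mem_insert_of_mem hi) k (Finset.mem_insert_of_mem hk))
    rw [Finset.sum_insert hj, Finset.inf_insert]
    by_cases htop : v (y j) = ⊤
    · have : y j = 0 := (AddValuation.top_iff v).mp htop
      rw [this, zero_add, ih']
      simp [AddValuation.map_zero]
    · have hne : v (y j) ≠ v (∑ i ∈ s, y i) := by
        rw [ih']
        intro heq
        rcases Finset.eq_empty_or_nonempty s with rfl | hs
        · rw [Finset.inf_empty] at heq; exact htop heq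
        · obtain ⟨i, hi, hinf⟩ := Finset.exists_mem_eq_inf s hs (fun i => v (y i))
          rw [hinf] at heq
          rcases h j (Finset.mem_insert_self j s) i (Finset.mem_insert_of_mem hi) heq with h1 | rfl
          · exact htop h1
          · exact hj hi
      rw [AddValuation.map_add_of_distinct_val v hne, ih']

/-- Theorem 5.11: the elements `π_K^{-ν_i} f^i(π_L^a)`, `i = 0, …, p-1`, have `L`-valuations
exactly `{0, …, p-1}` in some order, and form an `𝒪_K`-basis of `𝒪_L`. -/
theorem stmt_15 (p : ℕ) (hp : p.Prime) (K L : Type*) [Field K] [Field L] [Algebra K L]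
    [FiniteDimensional K L] (hdeg : Module.finrank K L = p)
    (σ : L ≃ₐ[K] L) (hord : orderOf σ = p)
    (v : AddValuation L (WithTop ℤ))
    (hsurj : ∀ m : ℤ, ∃ x : L, v x = (m : WithTop ℤ))
    (htot : ∀ c : K, c ≠ 0 → ∃ m : ℤ, v (algebraMap K L c) = ((p * m : ℤ) : WithTop ℤ))
    (πL : L) (hπL : v πL = ((1 : ℤ) : WithTop ℤ))
    (πK : K) (hπK : v (algebraMap K L πK) = ((p : ℤ) : WithTop ℤ))
    (t : ℕ) (ht1 : 1 ≤ t) (hpt : ¬ (p ∣ t))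
    (hGt : ∀ x : L, (0 : WithTop ℤ) ≤ v x → (((t : ℤ) + 1 : ℤ) : WithTop ℤ) ≤ v (σ x - x))
    (hjump : v (σ πL - πL) = (((t : ℤ) + 1 : ℤ) : WithTop ℤ))
    (a : ℕ) (ha : a = t % p) (ha0 : a ≠ 0)
    (ν : ℕ → ℕ) (hν : ∀ i, ν i = (a + i * t) / p)
    (hval : ∀ i ≤ p - 1,
      v ((fun x : L => σ x - x)^[i] (πL ^ a)) = (((a : ℤ) + (i : ℤ) * (t : ℤ)) : WithTop ℤ))
    (x : ℕ → L)
    (hx : ∀ i, x i = (algebraMap K L πK) ^ (-(ν i : ℤ)) * (fun y : L => σ y - y)^[i] (πL ^ a)) :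
    (Finset.image (fun i => v (x i)) (Finset.range p)
        = Finset.image (fun j : ℕ => ((j : ℤ) : WithTop ℤ)) (Finset.range p)) ∧
    (∀ y : L, (0 : WithTop ℤ) ≤ v y → ∃ c : ℕ → K,
        (∀ i, (0 : WithTop ℤ) ≤ v (algebraMap K L (c i))) ∧
        y = ∑ i ∈ Finset.range p, algebraMap K L (c i) * x i) ∧
    LinearIndependent K (fun i : Fin p => x (i : ℕ)) := by
  classical
  have hp0 : 0 < p := hp.pos
  set r : ℕ → ℕ := fun i => (a + i * t) % p with hr
  have hrlt : ∀ i, r i < p := fun i => Nat.mod_lt _ hp0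
  -- injectivity of r on [0, p)
  have hrinj : ∀ i < p, ∀ j < p, r i = r j → i = j := by
    intro i hi j hj hij
    haveI : Fact p.Prime := ⟨hp⟩
    have hcast : ((a + i * t : ℕ) : ZMod p) = ((a + j * t : ℕ) : ZMod p) := by
      rw [← ZMod.natCast_mod (a + i * t) p, ← ZMod.natCast_mod (a + j * t) p]
      exact congrArg Nat.cast hij
    push_cast at hcast
    have ht0 : (t : ZMod p) ≠ 0 := by
      rw [Ne, ZMod.natCast_eq_zero_iff]; exact hpt
    have : (i : ZMod p) = (j : ZMod p) := by
      have := add_left_cancel hcast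
      exact mul_right_cancel₀ ht0 this
    have := congrArg ZMod.val this
    rwa [ZMod.val_cast_of_lt hi, ZMod.val_cast_of_lt hj] at this
  -- πK is nonzero in L
  have hA : algebraMap K L πK ≠ 0 := by
    intro h0
    rw [h0, AddValuation.map_zero] at hπK
    exact (WithTop.coe_ne_top (α := ℤ)) hπK.symm
  -- valuation of x i
  have hxv : ∀ i < p, v (x i) = ((r i : ℤ) : WithTop ℤ) := by
    intro i hi
    have key : (algebraMap K L πK) ^ (ν i) * x i = (fun y : L => σ y - y)^[i] (πL ^ a) := by
      rw [hx i, ← mul_assoc, zpow_neg, zpow_natCast, mul_inv_cancel₀ (pow_ne_zero _ hA), one_mul]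
    have hv1 : ((ν i * p : ℤ) : WithTop ℤ) + v (x i)
        = (((a : ℤ) + (i : ℤ) * (t : ℤ)) : WithTop ℤ) := by
      rw [← hval i (by omega), ← key, AddValuation.map_mul, AddValuation.map_pow, hπK,
        ← WithTop.coe_nsmul]
      norm_num [nsmul_eq_mul]
    have := coe_cancel hv1
    rw [this, WithTop.coe_inj]
    have hdm : p * ν i + r i = a + i * t := by
      rw [hν i]; exact Nat.div_add_mod (a + i * t) p
    have hdm' : (p : ℤ) * (ν i : ℤ) + (r i : ℤ) = (a : ℤ) + (i : ℤ) * (t : ℤ) := by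
      exact_mod_cast congrArg (Nat.cast : ℕ → ℤ) hdm
    linear_combination -hdm'
  -- valuation of a nonzero scalar times x i
  have hzv : ∀ (c : K), c ≠ 0 → ∀ i < p, ∃ m : ℤ,
      v (algebraMap K L c) = (((p : ℤ) * m : ℤ) : WithTop ℤ) ∧
      v (algebraMap K L c * x i) = (((p : ℤ) * m + (r i : ℤ) : ℤ) : WithTop ℤ) := by
    intro c hc i hi
    obtain ⟨m, hm⟩ := htot c hc
    exact ⟨m, hm, by rw [AddValuation.map_mul, hm, hxv i hi, ← WithTop.coe_add]⟩
  -- distinctness of valuations of terms c i * x i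
  have hdist : ∀ (ci cj : K), ∀ i < p, ∀ j < p,
      v (algebraMap K L ci * x i) = v (algebraMap K L cj * x j) →
      v (algebraMap K L ci * x i) = ⊤ ∨ i = j := by
    intro ci cj i hi j hj hij
    by_cases hci : ci = 0
    · left; rw [hci, map_zero, zero_mul, AddValuation.map_zero]
    by_cases hcj : cj = 0
    · left; rw [hcj, map_zero, zero_mul, AddValuation.map_zero] at hij; exact hij
    · right
      obtain ⟨mi, _, hmi⟩ := hzv ci hci i hi
      obtain ⟨mj, _, hmj⟩ := hzv cj hcj j hj
      rw [hmi, hmj, WithTop.coe_inj] at hij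
      have hd : (p : ℤ) * (mj - mi) = (r i : ℤ) - (r j : ℤ) := by ring_nf; linarith
      have hb1 : (r i : ℤ) < p := by exact_mod_cast hrlt i
      have hb2 : (r j : ℤ) < p := by exact_mod_cast hrlt j
      have hij' : r i = r j := by
        rcases lt_trichotomy (mj - mi) 0 with h | h | h
        · nlinarith [Int.add_one_le_iff.mpr h]
        · rw [h, mul_zero] at hd; omega
        · nlinarith [Int.add_one_le_iff.mpr h]
      exact hrinj i hi j hj hij'
  -- linear independence
  have li : LinearIndependent K (fun i : Fin p => x (i : ℕ)) := by
    rw [Fintype.linearIndependent_iff]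
    intro g hg
    by_contra hgn
    push_neg at hgn
    obtain ⟨i0, hi0⟩ := hgn
    simp only [Algebra.smul_def] at hg
    have hsum : v (∑ i : Fin p, algebraMap K L (g i) * x (i : ℕ))
        = Finset.univ.inf (fun i : Fin p => v (algebraMap K L (g i) * x (i : ℕ))) := by
      apply val_sum
      intro i _ j _ hij
      rcases hdist (g i) (g j) i i.isLt j j.isLt hij with h | h
      · exact Or.inl h
      · exact Or.inr (Fin.ext h)
    rw [hg, AddValuation.map_zero] at hsum
    have htop : v (algebraMap K L (g i0) * x (i0 : ℕ)) = ⊤ :=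
      top_le_iff.mp (hsum.symm ▸ Finset.inf_le (Finset.mem_univ i0))
    obtain ⟨m, _, hm⟩ := hzv (g i0) hi0 i0 i0.isLt
    rw [hm] at htop
    exact WithTop.coe_ne_top htop
  -- the image of valuations
  have himg : Finset.image r (Finset.range p) = Finset.range p := by
    apply Finset.eq_of_subset_of_card_le
    · intro n hn
      obtain ⟨i, _, rfl⟩ := Finset.mem_image.mp hn
      exact Finset.mem_range.mpr (hrlt i)
    · rw [Finset.card_image_of_injOn fun i hi j hj =>
        hrinj i (Finset.mem_range.mp hi) j (Finset.mem_range.mp hj)]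
  have part1 : Finset.image (fun i => v (x i)) (Finset.range p)
      = Finset.image (fun j : ℕ => ((j : ℤ) : WithTop ℤ)) (Finset.range p) := by
    conv_rhs => rw [← himg]
    rw [Finset.image_image]
    apply Finset.image_congr
    intro i hi
    exact hxv i (Finset.mem_range.mp hi)
  refine ⟨part1, ?_, li⟩
  -- spanning
  intro y hy
  have hcard : Fintype.card (Fin p) = Module.finrank K L := by simp [hdeg]
  haveI : Nonempty (Fin p) := ⟨⟨0, hp0⟩⟩
  let B := basisOfLinearIndependentOfCardEqFinrank li hcard
  have hB : ∀ i : Fin p, B i = x (i : ℕ) := fun i => by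
    simp only [B, coe_basisOfLinearIndependentOfCardEqFinrank]
  set c : ℕ → K := fun n => if h : n < p then B.repr y ⟨n, h⟩ else 0 with hc
  have hterm : ∀ i : Fin p, algebraMap K L (c (i : ℕ)) * x (i : ℕ) = B.repr y i • B i := by
    intro i
    rw [hB, ← Algebra.smul_def]
    congr 1
    simp [hc, i.isLt]
  have hrepr : y = ∑ i ∈ Finset.range p, algebraMap K L (c i) * x i := by
    rw [← Fin.sum_univ_eq_sum_range (fun n => algebraMap K L (c n) * x n) p]
    rw [Finset.sum_congr rfl (fun i _ => hterm i)]
    exact (B.sum_repr y).symm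
  refine ⟨c, ?_, hrepr⟩
  have hsum : v (∑ i ∈ Finset.range p, algebraMap K L (c i) * x i)
      = (Finset.range p).inf (fun i => v (algebraMap K L (c i) * x i)) := by
    apply val_sum
    intro i hi j hj hij
    exact hdist (c i) (c j) i (Finset.mem_range.mp hi) j (Finset.mem_range.mp hj) hij
  have hvy : v y = (Finset.range p).inf (fun i => v (algebraMap K L (c i) * x i)) := by
    rw [hrepr]; exact hsum
  intro i
  by_cases hip : i < p
  · by_cases hci : c i = 0
    · rw [hci, map_zero, AddValuation.map_zero]; exact le_top
    · obtain ⟨m, hm1, hm2⟩ := hzv (c i) hci i hip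
      have h1 : (0 : WithTop ℤ) ≤ v (algebraMap K L (c i) * x i) :=
        le_trans hy (hvy ▸ Finset.inf_le (Finset.mem_range.mpr hip))
      rw [hm2] at h1
      have h2 : (0 : ℤ) ≤ (p : ℤ) * m + (r i : ℤ) := by exact_mod_cast h1
      have hb1 : (r i : ℤ) < p := by exact_mod_cast hrlt i
      have hpz : (0 : ℤ) < p := by exact_mod_cast hp0
      have hm0 : 0 ≤ m := by
        by_contra hneg
        push_neg at hneg
        have hle : m ≤ -1 := by omega
        have h3 : (p : ℤ) * m ≤ (p : ℤ) * (-1) := mul_le_mul_of_nonneg_left hle hpz.le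
        linarith
      rw [hm1]
      exact_mod_cast mul_nonneg hpz.le hm0
  · have hci : c i = 0 := dif_neg hip
    rw [hci, map_zero, AddValuation.map_zero]; exact le_top
end
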